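/- arXiv:2307.11347 — 2 statements merged into one kernel-verified Lean document; each statement's English description precedes it below -/
import Mathlib

section
/- Suppose the t-structure (D^{≤0}, D^{≥1}) is nondegenerate and let n be a positive integer. Then the bijection between ICE sequences in H and homology-determined preaisles in D restricts to a bijective correspondence between the set of ICE sequences in H of length n and the set of n-intermediate homology-determined preaisles in D. -/
/-!
`θ` is inverted by `U ↦ (k ↦ H ∩ U[k])`. If `C` is an ICE sequence, `θ(C)` is closed under
extensions: the cohomology of a triangle gives exact sequences `X₀ → X₁ → X₂ → X₃ → X₄` with
`X₀ ∈ C(k-1)`, `X₁, X₃ ∈ C(k)`, `X₄ ∈ C(k+1)`, and then `X₂` is an extension of `ker(X₃ → X₄)`,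
which lies in `C(k)` because `X₄ ∈ αC(k)`, by `coker(X₀ → X₁)`, which lies in `C(k)` as a
quotient of `X₁` inside `αC(k-1)`. Conversely, for a homology-determined preaisle `U` the
cokernel and kernel of a morphism `f` of `H ∩ U[k-1]` into `H ∩ U[k]` are `H^k` and `H^{k-1}`
of the cone of `f[-k]`, which lies in `U`; this gives the ICE and torsion-class conditions.
For the length condition, `θ(C) ⊆ D^{≤0}` uses nondegeneracy: an object of `D^{≥m}` whose
cohomology vanishes lies in every `D^{≥r}`, hence is zero.
-/

open CategoryTheory Limits ZeroObject

namespace ICEPaper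

section AbelianPart


variable {A : Type*} [Category A] [Abelian A]

/-- A full additive subcategory (given by its class of objects), closed under isomorphisms. -/
structure IsSubcat (C : Set A) : Prop where
  mem_of_iso : ∀ ⦃X Y : A⦄, (X ≅ Y) → X ∈ C → Y ∈ C
  zero_mem : (0 : A) ∈ C
  biprod_mem : ∀ ⦃X Y : A⦄, X ∈ C → Y ∈ C → (X ⊞ Y) ∈ C

/-- `C` is closed under extensions. -/
def ClosedUnderExtensions (C : Set A) : Prop :=
  ∀ (S : ShortComplex A), S.ShortExact → S.X₁ ∈ C → S.X₃ ∈ C → S.X₂ ∈ C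

/-- `C` is closed under quotients in `A`. -/
def ClosedUnderQuotients (C : Set A) : Prop :=
  ∀ ⦃X Y : A⦄ (f : X ⟶ Y), Epi f → X ∈ C → Y ∈ C

/-- `C` is closed under images. -/
def ClosedUnderImages (C : Set A) : Prop :=
  ∀ ⦃X Y : A⦄ (f : X ⟶ Y), X ∈ C → Y ∈ C → image f ∈ C

/-- `C` is closed under cokernels. -/
def ClosedUnderCokernels (C : Set A) : Prop :=
  ∀ ⦃X Y : A⦄ (f : X ⟶ Y), X ∈ C → Y ∈ C → cokernel f ∈ C

/-- `C` is closed under kernels. -/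
def ClosedUnderKernels (C : Set A) : Prop :=
  ∀ ⦃X Y : A⦄ (f : X ⟶ Y), X ∈ C → Y ∈ C → kernel f ∈ C

/-- `C` is a torsion class in `A`. -/
structure IsTorsionClass (C : Set A) : Prop where
  subcat : IsSubcat C
  ext : ClosedUnderExtensions C
  quot : ClosedUnderQuotients C

/-- `C` is a wide subcategory of `A`. -/
structure IsWide (C : Set A) : Prop where
  subcat : IsSubcat C
  ext : ClosedUnderExtensions C
  ker : ClosedUnderKernels C
  coker : ClosedUnderCokernels C

/-- `C` is an ICE-closed subcategory of `A`. -/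
structure IsICEClosed (C : Set A) : Prop where
  subcat : IsSubcat C
  im : ClosedUnderImages C
  coker : ClosedUnderCokernels C
  ext : ClosedUnderExtensions C

/-- `αC = {X ∈ C ∣ every morphism f : C' ⟶ X with C' ∈ C has ker f ∈ C}`. -/
def alphaSub (C : Set A) : Set A :=
  {X | X ∈ C ∧ ∀ ⦃C' : A⦄ (f : C' ⟶ X), C' ∈ C → kernel f ∈ C}

/-- `D` is a torsion class in the full (wide, hence abelian) subcategory `W` of `A`:
`D ⊆ W`, and `D` is closed under extensions and quotients inside `W`.
(Here short exact sequences and epimorphisms in the wide subcategory `W` are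
exactly those of `A` with terms in `W`.) -/
structure IsTorsionClassIn (W D : Set A) : Prop where
  subset : D ⊆ W
  subcat : IsSubcat D
  ext : ∀ (S : ShortComplex A), S.ShortExact → S.X₁ ∈ D → S.X₃ ∈ D → S.X₂ ∈ D
  quot : ∀ ⦃X Y : A⦄ (f : X ⟶ Y), Epi f → X ∈ D → Y ∈ W → Y ∈ D

/-- The exactness condition defining narrow sequences: for every exact sequence
`A → B → C → D → E` with `A ∈ C(k−1)`, `B, D ∈ C(k)` and `E ∈ C(k+1)` one has `C ∈ C(k)`. -/
def NarrowCondition (C : ℤ → Set A) : Prop :=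
  ∀ (k : ℤ) (S : ComposableArrows A 4), S.Exact →
    S.obj' 0 ∈ C (k - 1) → S.obj' 1 ∈ C k → S.obj' 3 ∈ C k → S.obj' 4 ∈ C (k + 1) →
    S.obj' 2 ∈ C k

/-- A narrow sequence in `A`. -/
structure IsNarrowSequence (C : ℤ → Set A) : Prop where
  subcat : ∀ k, IsSubcat (C k)
  decreasing : ∀ k, C (k + 1) ⊆ C k
  narrow : NarrowCondition C

/-- An ICE sequence in `A`. -/
structure IsICESequence (C : ℤ → Set A) : Prop where
  ice : ∀ k, IsICEClosed (C k)
  tors : ∀ k, IsTorsionClassIn (alphaSub (C k)) (C (k + 1))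

/-- The zero subcategory. -/
def zeroSubcat : Set A := {X | IsZero X}


end AbelianPart


section Approximations

variable {C : Type*} [Category C]

/-- A subcategory `B` (given by its class of objects) of a category is contravariantly finite
if every object admits a right `B`-approximation. -/
def ContravariantlyFinite (B : Set C) : Prop :=
  ∀ X : C, ∃ (B₀ : C) (_ : B₀ ∈ B) (f : B₀ ⟶ X),
    ∀ (B' : C) (_ : B' ∈ B) (g : B' ⟶ X), ∃ h : B' ⟶ B₀, h ≫ f = g

/-- Dually, `B` is covariantly finite if every object admits a left `B`-approximation. -/
def CovariantlyFinite (B : Set C) : Prop :=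
  ∀ X : C, ∃ (B₀ : C) (_ : B₀ ∈ B) (f : X ⟶ B₀),
    ∀ (B' : C) (_ : B' ∈ B) (g : X ⟶ B'), ∃ h : B₀ ⟶ B', f ≫ h = g

end Approximations

open Pretriangulated Triangulated

variable {D : Type*} [Category D] [Preadditive D] [HasZeroObject D] [HasShift D ℤ]
  [∀ n : ℤ, (shiftFunctor D n).Additive] [Pretriangulated D]

/-- The shifted subcategory `U[k] = {X ∣ X⟦-k⟧ ∈ U}`. -/
def shiftSet (U : Set D) (k : ℤ) : Set D := {X : D | X⟦(-k)⟧ ∈ U}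

/-- A preaisle: a subcategory (full, iso-closed, containing `0`) closed under extensions and
positive shifts. -/
structure IsPreaisle (U : Set D) : Prop where
  mem_of_iso : ∀ ⦃X Y : D⦄, (X ≅ Y) → X ∈ U → Y ∈ U
  zero_mem : (0 : D) ∈ U
  ext : ∀ (T : Triangle D), T ∈ (distTriang D) → T.obj₁ ∈ U → T.obj₃ ∈ U → T.obj₂ ∈ U
  shift : ∀ ⦃X : D⦄, X ∈ U → X⟦(1 : ℤ)⟧ ∈ U

/-- A thick subcategory: a triangulated subcategory closed under direct summands. -/
structure IsThick (E : Set D) : Prop where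
  mem_of_iso : ∀ ⦃X Y : D⦄, (X ≅ Y) → X ∈ E → Y ∈ E
  zero_mem : (0 : D) ∈ E
  ext : ∀ (T : Triangle D), T ∈ (distTriang D) → T.obj₁ ∈ E → T.obj₃ ∈ E → T.obj₂ ∈ E
  shift : ∀ ⦃X : D⦄ (k : ℤ), X ∈ E → X⟦k⟧ ∈ E
  summand : ∀ ⦃X Y : D⦄ (i : X ⟶ Y) (r : Y ⟶ X), i ≫ r = 𝟙 X → Y ∈ E → X ∈ E

variable (t : TStructure D)

/-- `D^{≤n}` as a set of objects. -/
def DLE (n : ℤ) : Set D := {X : D | t.le n X}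

/-- `D^{≥n}` as a set of objects. -/
def DGE (n : ℤ) : Set D := {X : D | t.ge n X}

/-- The heart `D^{≤0} ∩ D^{≥0}` of the t-structure, as a set of objects of `D`. -/
def heartSet : Set D := {X : D | t.le 0 X ∧ t.ge 0 X}

/-- The t-structure `t` is bounded. -/
def BoundedT : Prop := ∀ X : D, (∃ n : ℤ, t.le n X) ∧ (∃ n : ℤ, t.ge n X)

/-- The t-structure `t` is nondegenerate. -/
def NonDegenerateT : Prop :=
  (∀ X : D, (∀ n : ℤ, t.le n X) → IsZero X) ∧ (∀ X : D, (∀ n : ℤ, t.ge n X) → IsZero X)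

/-- `U` is an aisle: it is the aisle (`D'^{≤0}`) of some t-structure on `D`. -/
def IsAisle (U : Set D) : Prop := ∃ t' : TStructure D, U = DLE t' 0

/-- Data realizing the heart of the t-structure `t` as an abelian category `A`:
a fully faithful additive functor `ι : A ⥤ D` with essential image the heart of `t`,
identifying short exact sequences in `A` with distinguished triangles of `D` with all three
objects in the heart, together with the associated cohomological functor `H⁰ : D ⥤ A`
(characterized by being homological, restricting to the identity on the heart, and the
standard vanishing on `D^{≤n}` and `D^{≥n}`). -/
structure HeartData (A : Type*) [Category A] [Abelian A] where
  ι : A ⥤ D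
  full : ι.Full
  faithful : ι.Faithful
  additive : ι.Additive
  mem_heart : ∀ Y : A, ι.obj Y ∈ heartSet t
  heart_mem : ∀ X : D, X ∈ heartSet t → ∃ Y : A, Nonempty (ι.obj Y ≅ X)
  shortExact_iff : ∀ S : ShortComplex A, S.ShortExact ↔
    ∃ h : ι.obj S.X₃ ⟶ (ι.obj S.X₁)⟦(1 : ℤ)⟧,
      Triangle.mk (ι.map S.f) (ι.map S.g) h ∈ distTriang D
  H0 : D ⥤ A
  homological : H0.IsHomological
  H0_additive : H0.Additive
  heartIso : ι ⋙ H0 ≅ 𝟭 A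
  LE_vanish : ∀ (X : D) (n k : ℤ), t.le n X → n < k → IsZero (H0.obj (X⟦k⟧))
  GE_vanish : ∀ (X : D) (n k : ℤ), t.ge n X → k < n → IsZero (H0.obj (X⟦k⟧))

variable {t} {A : Type*} [Category A] [Abelian A] (hd : HeartData t A)

/-- The cohomology `H^k = H⁰ ∘ ⟦k⟧`, on objects. -/
def HeartData.H (k : ℤ) (X : D) : A := hd.H0.obj (X⟦k⟧)

/-- `U ⊆ D` is homology-determined: `X ∈ U` iff `H^k X ∈ U[k]` for all `k ∈ ℤ`. -/
def IsHomDet (U : Set D) : Prop :=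
  ∀ X : D, X ∈ U ↔ ∀ k : ℤ, hd.ι.obj (hd.H k X) ∈ shiftSet U k

/-- `H^k U`, the image of `U` under `H^k`, as a subcategory of the heart `A`
(closed under isomorphisms). -/
def HkSet (U : Set D) (k : ℤ) : Set A := {Y : A | ∃ X ∈ U, Nonempty (Y ≅ hd.H k X)}

/-- `θ(C) = {X ∈ D ∣ H^k X ∈ C(k) for all k ∈ ℤ}`. -/
def thetaSet (C : ℤ → Set A) : Set D := {X : D | ∀ k : ℤ, hd.H k X ∈ C k}

/-- `E ⊆ D` is `H⁰`-stable: `H⁰ X ∈ E` for every `X ∈ E`. -/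
def H0Stable (E : Set D) : Prop := ∀ X ∈ E, hd.ι.obj (hd.H 0 X) ∈ E

section Abelian

lemma IsSubcat.mem_of_isZero {C : Set A} (hC : IsSubcat C) {X : A} (hX : IsZero X) : X ∈ C :=
  hC.mem_of_iso hX.isoZero.symm hC.zero_mem

lemma IsICESequence.subcat {C : ℤ → Set A} (hC : IsICESequence C) (k : ℤ) : IsSubcat (C k) :=
  (hC.ice k).subcat

lemma IsICESequence.antitone {C : ℤ → Set A} (hC : IsICESequence C) : Antitone C :=
  antitone_int_of_succ_le fun k _ hY => ((hC.tors k).subset hY).1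

lemma IsICESequence.tors_pred {C : ℤ → Set A} (hC : IsICESequence C) (k : ℤ) :
    IsTorsionClassIn (alphaSub (C (k - 1))) (C k) := by
  simpa using hC.tors (k - 1)

lemma shortExact_kernel_ι {X Y : A} (g : X ⟶ Y) [Epi g] :
    (ShortComplex.mk (kernel.ι g) g (kernel.condition g)).ShortExact :=
  ⟨ShortComplex.exact_of_f_is_kernel _ (kernelIsKernel g)⟩

noncomputable def cokernelKernelιIsoOfEpi {X Y : A} (g : X ⟶ Y) [Epi g] :
    cokernel (kernel.ι g) ≅ Y :=
  (colimit.isColimit _).coconePointUniqueUpToIso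
    (Abelian.epiIsCokernelOfKernel _ (limit.isLimit _))

lemma cokernel_mem_alphaSub {C : Set A} (hC : IsICEClosed C) {X B : A} (f : X ⟶ B)
    (hX : X ∈ C) (hB : B ∈ alphaSub C) : cokernel f ∈ alphaSub C := by
  refine ⟨hC.coker f hX hB.1, fun C' φ hC' => ?_⟩
  have sq := IsPullback.of_hasPullback φ (cokernel.π f)
  have := isIso_kernel_map_of_isPullback sq
  have := isIso_kernel_map_of_isPullback sq.flip
  -- the pullback of `cokernel.π f` along `φ` is an extension of `C'` by `image f`
  have hP : pullback φ (cokernel.π f) ∈ C :=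
    hC.ext _ (shortExact_kernel_ι (pullback.fst φ (cokernel.π f)))
      (hC.subcat.mem_of_iso ((Abelian.imageIsoImage f).symm ≪≫
        (asIso (kernel.map _ _ _ _ sq.w)).symm) (hC.im f hX hB.1)) hC'
  exact hC.subcat.mem_of_iso (asIso (kernel.map _ _ _ _ sq.flip.w)) (hB.2 _ hP)

section FourTerms

variable {X₀ X₁ X₂ X₃ X₄ : A} {f : X₀ ⟶ X₁} {g : X₁ ⟶ X₂} {h : X₂ ⟶ X₃} {i : X₃ ⟶ X₄}
  {wfg : f ≫ g = 0} {wgh : g ≫ h = 0} {whi : h ≫ i = 0}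

lemma shortExact_cokernelDesc_kernelLift (hfg : (ShortComplex.mk f g wfg).Exact)
    (hgh : (ShortComplex.mk g h wgh).Exact) (hhi : (ShortComplex.mk h i whi).Exact) :
    (ShortComplex.mk (cokernel.desc f g wfg) (kernel.lift i h whi)
      (by ext; simp [wgh])).ShortExact := by
  have := hfg.mono_cokernelDesc
  have := hhi.epi_kernelLift
  let S : ShortComplex A := .mk g (kernel.lift i h whi) (by ext; simp [wgh])
  have hS : S.Exact := (ShortComplex.exact_iff_of_epi_of_isIso_of_mono
    (show S ⟶ .mk g h wgh from ⟨𝟙 _, 𝟙 _, kernel.ι i, by simp [S], by simp [S]⟩)).2 hgh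
  exact .mk' ((ShortComplex.exact_iff_of_epi_of_isIso_of_mono
    (show S ⟶ .mk _ _ _ from ⟨cokernel.π f, 𝟙 _, 𝟙 _, by simp [S], by simp [S]⟩)).1 hS)
    inferInstance inferInstance

lemma mem_of_exact_of_isTorsionClassIn {C₀ C₁ C₂ : Set A} (h₀ : IsICEClosed C₀)
    (h₁ : ClosedUnderExtensions C₁) (t₁ : IsTorsionClassIn (alphaSub C₀) C₁)
    (t₂ : IsTorsionClassIn (alphaSub C₁) C₂) (hfg : (ShortComplex.mk f g wfg).Exact)
    (hgh : (ShortComplex.mk g h wgh).Exact) (hhi : (ShortComplex.mk h i whi).Exact)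
    (hX₀ : X₀ ∈ C₀) (hX₁ : X₁ ∈ C₁) (hX₃ : X₃ ∈ C₁) (hX₄ : X₄ ∈ C₂) : X₂ ∈ C₁ := by
  have hcoker : cokernel f ∈ C₁ :=
    t₁.quot (cokernel.π f) inferInstance hX₁ (cokernel_mem_alphaSub h₀ f hX₀ (t₁.subset hX₁))
  have hker : kernel i ∈ C₁ := (t₂.subset hX₄).2 i hX₃
  exact h₁ _ (shortExact_cokernelDesc_kernelLift hfg hgh hhi) hcoker hker

end FourTerms

end Abelian

section Heart

attribute [local instance] HeartData.full HeartData.faithful HeartData.homological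

noncomputable instance : hd.H0.ShiftSequence ℤ := Functor.ShiftSequence.tautological _ _

lemma IsPreaisle.mem_of_isZero {U : Set D} (hU : IsPreaisle U) {X : D} (hX : IsZero X) :
    X ∈ U :=
  hU.mem_of_iso hX.isoZero.symm hU.zero_mem

noncomputable def HeartData.shiftIso (m j r : ℤ) (h : m + j = r) (X : D) :
    hd.H j (X⟦m⟧) ≅ hd.H r X :=
  hd.H0.mapIso ((shiftFunctorAdd' D m j r h).app X).symm

noncomputable def HeartData.shiftNegIso (k : ℤ) :
    hd.ι ⋙ shiftFunctor D (-k) ⋙ shiftFunctor D k ⋙ hd.H0 ≅ 𝟭 A :=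
  Functor.isoWhiskerLeft hd.ι ((Functor.associator _ _ _).symm ≪≫
    Functor.isoWhiskerRight (shiftFunctorCompIsoId D (-k) k (neg_add_cancel k)) hd.H0 ≪≫
    Functor.leftUnitor hd.H0) ≪≫ hd.heartIso

lemma HeartData.isZero_H_of_isZero {X : D} (hX : IsZero X) (k : ℤ) : IsZero (hd.H k X) :=
  hd.H0.map_isZero ((shiftFunctor D k).map_isZero hX)

lemma HeartData.isZero_H_shift (Y : A) {m j : ℤ} (h : m + j ≠ 0) :
    IsZero (hd.H j ((hd.ι.obj Y)⟦m⟧)) := by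
  refine IsZero.of_iso ?_ (hd.shiftIso m j (m + j) rfl (hd.ι.obj Y))
  rcases h.lt_or_gt with hlt | hlt
  · exact hd.GE_vanish (hd.ι.obj Y) 0 (m + j) (hd.mem_heart Y).2 hlt
  · exact hd.LE_vanish (hd.ι.obj Y) 0 (m + j) (hd.mem_heart Y).1 hlt

lemma HeartData.isZero_of_le_of_ge {Z : D} {m : ℤ} (hL : t.le m Z) (hG : t.ge m Z)
    (hH : IsZero (hd.H m Z)) : IsZero Z := by
  obtain ⟨W, ⟨e⟩⟩ := hd.heart_mem (Z⟦m⟧)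
    ⟨t.le_shift m m 0 (add_zero m) Z hL, t.ge_shift m m 0 (add_zero m) Z hG⟩
  have hW : IsZero W := hH.of_iso ((hd.heartIso.app W).symm ≪≫ hd.H0.mapIso e)
  exact ((shiftFunctor D (-m)).map_isZero ((hd.ι.map_isZero hW).of_iso e.symm)).of_iso
    ((shiftEquiv D m).unitIso.app Z)

lemma HeartData.ge_succ_of_isZero_H {Y : D} {m : ℤ} (hG : t.ge m Y)
    (hH : IsZero (hd.H m Y)) : t.ge (m + 1) Y := by
  -- in the truncation triangle `Y' → Y → Y''` at `m`, `Y'` lies in `H[-m]` and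
  -- `H^m Y' ↪ H^m Y = 0`, so `Y ≅ Y''`
  obtain ⟨Y', Y'', hL', hG'', a, b, c, hT⟩ := t.exists_triangle Y m (m + 1) rfl
  have hG' : t.ge m Y' :=
    (t.isGE₂ _ (inv_rot_of_distTriang _ hT) m
      ⟨t.ge_antitone (by omega : m ≤ m + 2) _ (t.ge_shift (m + 1) (-1) (m + 2) (by omega) _ hG'')⟩
      ⟨hG⟩).ge
  have hY' : IsZero Y' := hd.isZero_of_le_of_ge hL' hG'
    ((hd.H0.homologySequence_exact₁ _ hT (m - 1) m (by omega)).isZero_X₂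
      ((hd.GE_vanish Y'' (m + 1) (m - 1) hG'' (by omega)).eq_of_src _ _) (hH.eq_of_tgt _ _))
  have : IsIso b := (Triangle.isZero₁_iff_isIso₂ _ hT).1 hY'
  exact (t.ge (m + 1)).prop_of_iso (asIso b).symm hG''

lemma HeartData.isZero_of_ge_of_isZero_H (hnd : NonDegenerateT t) {Y : D} {m : ℤ}
    (hG : t.ge m Y) (hH : ∀ k, IsZero (hd.H k Y)) : IsZero Y := by
  have hge : ∀ r, m ≤ r → t.ge r Y :=
    Int.leInduction hG fun r _ hr => hd.ge_succ_of_isZero_H hr (hH r)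
  refine hnd.2 Y fun r => ?_
  rcases le_total m r with h | h
  · exact hge r h
  · exact t.ge_antitone h _ hG

lemma HeartData.le_zero_of_isZero_H_pos (hnd : NonDegenerateT t) {X : D}
    (hH : ∀ k, 0 < k → IsZero (hd.H k X)) : t.le 0 X := by
  obtain ⟨X', X'', hL, hG, a, b, c, hT⟩ := t.exists_triangle X 0 1 rfl
  have hX'' : IsZero X'' := hd.isZero_of_ge_of_isZero_H hnd hG fun k => by
    rcases lt_or_ge k 1 with hk | hk
    · exact hd.GE_vanish X'' 1 k hG hk
    · exact (hd.H0.homologySequence_exact₃ _ hT k (k + 1) rfl).isZero_X₂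
        ((hH k (by omega)).eq_of_src _ _) ((hd.LE_vanish X' 0 (k + 1) hL (by omega)).eq_of_tgt _ _)
  have : IsIso a := (Triangle.isZero₃_iff_isIso₁ _ hT).1 hX''
  exact (t.le 0).prop_of_iso (asIso a) hL

lemma shift_heart_mem_thetaSet_iff {C : ℤ → Set A} (hC : ∀ k, IsSubcat (C k)) (Y : A)
    (k : ℤ) : (hd.ι.obj Y)⟦-k⟧ ∈ thetaSet hd C ↔ Y ∈ C k := by
  refine ⟨fun hY => (hC k).mem_of_iso ((hd.shiftNegIso k).app Y) (hY k), fun hY j => ?_⟩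
  obtain rfl | hj := eq_or_ne j k
  · exact (hC j).mem_of_iso ((hd.shiftNegIso j).app Y).symm hY
  · exact (hC j).mem_of_isZero (hd.isZero_H_shift Y (by omega))

lemma isHomDet_thetaSet {C : ℤ → Set A} (hC : ∀ k, IsSubcat (C k)) :
    IsHomDet hd (thetaSet hd C) := fun _ =>
  forall_congr' fun k => (shift_heart_mem_thetaSet_iff hd hC _ k).symm

lemma isPreaisle_thetaSet {C : ℤ → Set A} (hC : IsICESequence C) :
    IsPreaisle (thetaSet hd C) where
  mem_of_iso _ _ e hX k :=
    (hC.subcat k).mem_of_iso (hd.H0.mapIso ((shiftFunctor D k).mapIso e)) (hX k)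
  zero_mem k := (hC.subcat k).mem_of_isZero (hd.isZero_H_of_isZero (isZero_zero D) k)
  ext T hT h₁ h₃ k :=
    mem_of_exact_of_isTorsionClassIn (hC.ice (k - 1)) (hC.ice k).ext (hC.tors_pred k) (hC.tors k)
      (hd.H0.homologySequence_exact₁ T hT (k - 1) k (by omega))
      (hd.H0.homologySequence_exact₂ T hT k) (hd.H0.homologySequence_exact₃ T hT k (k + 1) rfl)
      (h₃ (k - 1)) (h₁ k) (h₃ k) (h₁ (k + 1))
  shift _ hX k :=
    (hC.subcat k).mem_of_iso (hd.shiftIso 1 k (k + 1) (by omega) _).symm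
      (hC.antitone (by omega) (hX (k + 1)))

lemma DLE_subset_thetaSet {C : ℤ → Set A} (hC : IsICESequence C) {a : ℤ}
    (ha : C a = Set.univ) : DLE t a ⊆ thetaSet hd C := fun X hX k => by
  rcases le_or_gt k a with hk | hk
  · exact hC.antitone hk (ha ▸ Set.mem_univ _)
  · exact (hC.subcat k).mem_of_isZero (hd.LE_vanish X a k hX hk)

lemma thetaSet_subset_DLE_zero (hnd : NonDegenerateT t) {C : ℤ → Set A}
    (hC : IsICESequence C) (h₁ : C 1 = zeroSubcat) : thetaSet hd C ⊆ DLE t 0 := fun X hX =>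
  hd.le_zero_of_isZero_H_pos hnd fun k hk => by
    have hk₁ := hC.antitone (show 1 ≤ k by omega) (hX k)
    rwa [h₁] at hk₁

/-- `H ∩ U[k]`, which is `H^k U` when `U` is homology-determined. -/
def heartSlice (U : Set D) (k : ℤ) : Set A := {Y | hd.ι.obj Y ∈ shiftSet U k}

variable {U : Set D}

lemma thetaSet_heartSlice (hU : IsHomDet hd U) : thetaSet hd (heartSlice hd U) = U :=
  Set.ext fun X => (hU X).symm

lemma heartSlice_thetaSet {C : ℤ → Set A} (hC : ∀ k, IsSubcat (C k)) :
    heartSlice hd (thetaSet hd C) = C :=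
  funext fun k => Set.ext fun Y => shift_heart_mem_thetaSet_iff hd hC Y k

lemma heartSlice_ext (hU : IsPreaisle U) (k : ℤ) : ClosedUnderExtensions (heartSlice hd U k) :=
  fun S hS h₁ h₃ => by
    obtain ⟨h, hT⟩ := (hd.shortExact_iff S).1 hS
    exact hU.ext _ (Triangle.shift_distinguished _ hT (-k)) h₁ h₃

lemma isSubcat_heartSlice (hU : IsPreaisle U) (k : ℤ) : IsSubcat (heartSlice hd U k) where
  mem_of_iso _ _ e h := hU.mem_of_iso ((shiftFunctor D (-k)).mapIso (hd.ι.mapIso e)) h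
  zero_mem :=
    hU.mem_of_isZero ((shiftFunctor D (-k)).map_isZero (hd.ι.map_isZero (isZero_zero A)))
  biprod_mem _ _ hX hY :=
    heartSlice_ext hd hU k _ (ShortComplex.Splitting.ofHasBinaryBiproduct _ _).shortExact hX hY

lemma heartSlice_antitone (hU : IsPreaisle U) : Antitone (heartSlice hd U) :=
  antitone_int_of_succ_le fun k _ hY =>
    hU.mem_of_iso ((shiftFunctorAdd' D (-(k + 1)) 1 (-k) (by omega)).symm.app _) (hU.shift hY)

lemma cone_mem_of_mem_heartSlice (hU : IsPreaisle U) {k' k : ℤ} (hk : k' + 1 = k) {Y₁ Y₂ : A}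
    {f : Y₁ ⟶ Y₂} {Z : D} {g : (hd.ι.obj Y₂)⟦-k⟧ ⟶ Z} {h : Z ⟶ ((hd.ι.obj Y₁)⟦-k⟧)⟦(1 : ℤ)⟧}
    (hT : Triangle.mk ((hd.ι.map f)⟦-k⟧') g h ∈ distTriang D)
    (h₁ : Y₁ ∈ heartSlice hd U k') (h₂ : Y₂ ∈ heartSlice hd U k) : Z ∈ U :=
  hU.ext _ (rot_of_distTriang _ hT) h₂
    (hU.mem_of_iso ((shiftFunctorAdd' D (-k) 1 (-k') (by omega)).app _) h₁)

section Cone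

variable {Y₁ Y₂ : A} (f : Y₁ ⟶ Y₂) {k : ℤ} {Z : D} {g : (hd.ι.obj Y₂)⟦-k⟧ ⟶ Z}
  {h : Z ⟶ ((hd.ι.obj Y₁)⟦-k⟧)⟦(1 : ℤ)⟧}
  (hT : Triangle.mk ((hd.ι.map f)⟦-k⟧') g h ∈ distTriang D)

noncomputable def cokernelIsoH : cokernel f ≅ hd.H k Z :=
  have := (hd.H0.homologySequence_exact₃ _ hT k (k + 1) rfl).epi_f
      ((hd.isZero_H_shift Y₁ (show -k + (k + 1) ≠ 0 by omega)).eq_of_tgt _ _)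
  cokernel.mapIso _ _ ((hd.shiftNegIso k).app Y₁).symm ((hd.shiftNegIso k).app Y₂).symm
      ((hd.shiftNegIso k).inv.naturality f) ≪≫
    (colimit.isColimit _).coconePointUniqueUpToIso
      (hd.H0.homologySequence_exact₂ _ hT k).gIsCokernel

noncomputable def kernelIsoH {k' : ℤ} (hk : k' + 1 = k) : kernel f ≅ hd.H k' Z :=
  have := (hd.H0.homologySequence_exact₃ _ hT k' k hk).mono_g
      ((hd.isZero_H_shift Y₂ (show -k + k' ≠ 0 by omega)).eq_of_src _ _)
  (kernel.mapIso _ _ ((hd.shiftNegIso k).app Y₁) ((hd.shiftNegIso k).app Y₂)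
      ((hd.shiftNegIso k).hom.naturality f)).symm ≪≫
    (limit.isLimit _).conePointUniqueUpToIso
      (hd.H0.homologySequence_exact₁ _ hT k' k hk).fIsKernel

end Cone

lemma cokernel_mem_heartSlice (hU : IsPreaisle U) (hdet : IsHomDet hd U) {k' k : ℤ}
    (hk : k' + 1 = k) {Y₁ Y₂ : A} (f : Y₁ ⟶ Y₂) (h₁ : Y₁ ∈ heartSlice hd U k')
    (h₂ : Y₂ ∈ heartSlice hd U k) :
    cokernel f ∈ heartSlice hd U k := by
  obtain ⟨Z, g, h, hT⟩ := distinguished_cocone_triangle ((hd.ι.map f)⟦-k⟧')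
  exact (isSubcat_heartSlice hd hU k).mem_of_iso (cokernelIsoH hd f hT).symm
    ((hdet Z).1 (cone_mem_of_mem_heartSlice hd hU hk hT h₁ h₂) k)

lemma kernel_mem_heartSlice (hU : IsPreaisle U) (hdet : IsHomDet hd U) {k' k : ℤ}
    (hk : k' + 1 = k) {Y₁ Y₂ : A} (f : Y₁ ⟶ Y₂) (h₁ : Y₁ ∈ heartSlice hd U k')
    (h₂ : Y₂ ∈ heartSlice hd U k) :
    kernel f ∈ heartSlice hd U k' := by
  obtain ⟨Z, g, h, hT⟩ := distinguished_cocone_triangle ((hd.ι.map f)⟦-k⟧')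
  exact (isSubcat_heartSlice hd hU k').mem_of_iso (kernelIsoH hd f hT hk).symm
    ((hdet Z).1 (cone_mem_of_mem_heartSlice hd hU hk hT h₁ h₂) k')

lemma isICEClosed_heartSlice (hU : IsPreaisle U) (hdet : IsHomDet hd U) (k : ℤ) :
    IsICEClosed (heartSlice hd U k) where
  subcat := isSubcat_heartSlice hd hU k
  im _ _ f hX hY :=
    (isSubcat_heartSlice hd hU k).mem_of_iso (Abelian.coimageIsoImage' f)
      (cokernel_mem_heartSlice hd hU hdet (sub_add_cancel k 1) (kernel.ι f)
        (kernel_mem_heartSlice hd hU hdet (sub_add_cancel k 1) f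
          (heartSlice_antitone hd hU (by omega) hX) hY) hX)
  coker _ _ f hX hY :=
    cokernel_mem_heartSlice hd hU hdet (sub_add_cancel k 1) f
      (heartSlice_antitone hd hU (by omega) hX) hY
  ext := heartSlice_ext hd hU k

lemma isTorsionClassIn_heartSlice (hU : IsPreaisle U) (hdet : IsHomDet hd U) (k : ℤ) :
    IsTorsionClassIn (alphaSub (heartSlice hd U k)) (heartSlice hd U (k + 1)) where
  subset _ hY := ⟨heartSlice_antitone hd hU (by omega) hY,
    fun _ g hC' => kernel_mem_heartSlice hd hU hdet rfl g hC' hY⟩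
  subcat := isSubcat_heartSlice hd hU (k + 1)
  ext := heartSlice_ext hd hU (k + 1)
  quot _ _ g _ hX hY :=
    (isSubcat_heartSlice hd hU (k + 1)).mem_of_iso (cokernelKernelιIsoOfEpi g)
      (cokernel_mem_heartSlice hd hU hdet rfl (kernel.ι g)
        (hY.2 g (heartSlice_antitone hd hU (by omega) hX)) hX)

lemma isICESequence_heartSlice (hU : IsPreaisle U) (hdet : IsHomDet hd U) :
    IsICESequence (heartSlice hd U) :=
  ⟨isICEClosed_heartSlice hd hU hdet, isTorsionClassIn_heartSlice hd hU hdet⟩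

lemma heartSlice_one_eq_zeroSubcat (hU : IsPreaisle U) (hU₀ : U ⊆ DLE t 0) :
    heartSlice hd U 1 = zeroSubcat := by
  ext Y
  refine ⟨fun hY => ?_, fun hY => hU.mem_of_isZero
    ((shiftFunctor D (-1)).map_isZero (hd.ι.map_isZero hY))⟩
  have : t.IsLE ((hd.ι.obj Y)⟦(-1 : ℤ)⟧) 0 := ⟨hU₀ hY⟩
  have : t.IsLE (hd.ι.obj Y) (-1) := t.isLE_of_shift _ (-1) (-1) 0
  have : t.IsGE (hd.ι.obj Y) 0 := ⟨(hd.mem_heart Y).2⟩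
  exact IsZero.of_full_of_faithful_of_isZero hd.ι Y (t.isZero _ (-1) 0)

lemma heartSlice_eq_univ {a : ℤ} (hU : DLE t a ⊆ U) :
    heartSlice hd U a = Set.univ :=
  Set.eq_univ_of_forall fun Y => hU (t.le_shift 0 (-a) a (by omega) _ (hd.mem_heart Y).1)

end Heart

/-- **Corollary.** Suppose the t-structure is nondegenerate and let `n` be a positive integer.
Then `θ` restricts to a bijection between ICE sequences in the heart `H` of length `n`
(i.e. `C(1) = 0` and `C(-n+1) = H`) and `n`-intermediate homology-determined preaisles in `D`
(i.e. `D^{≤-n+1} ⊆ U ⊆ D^{≤0}`). -/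
theorem iceSequencesLength_equiv_intermediateHomDetPreaisles
    {D : Type*} [Category D] [Preadditive D] [HasZeroObject D] [HasShift D ℤ]
    [∀ n : ℤ, (shiftFunctor D n).Additive] [Pretriangulated D]
    {t : Triangulated.TStructure D} {A : Type*} [Category A] [Abelian A]
    (hd : HeartData t A) (hnd : NonDegenerateT t) (n : ℕ) (hn : 0 < n) :
    ∃ e : {C : ℤ → Set A // IsICESequence C ∧ C 1 = zeroSubcat ∧
            C (-(n : ℤ) + 1) = Set.univ} ≃
        {U : Set D // IsPreaisle U ∧ IsHomDet hd U ∧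
            DLE t (-(n : ℤ) + 1) ⊆ U ∧ U ⊆ DLE t 0},
      ∀ C, (e C).1 = thetaSet hd C.1 :=
  ⟨{ toFun := fun C => ⟨thetaSet hd C.1, isPreaisle_thetaSet hd C.2.1,
        isHomDet_thetaSet hd C.2.1.subcat, DLE_subset_thetaSet hd C.2.1 C.2.2.2,
        thetaSet_subset_DLE_zero hd hnd C.2.1 C.2.2.1⟩
     invFun := fun U => ⟨heartSlice hd U.1, isICESequence_heartSlice hd U.2.1 U.2.2.1,
        heartSlice_one_eq_zeroSubcat hd U.2.1 U.2.2.2.2, heartSlice_eq_univ hd U.2.2.2.1⟩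
     left_inv := fun C => Subtype.ext (heartSlice_thetaSet hd C.2.1.subcat)
     right_inv := fun U => Subtype.ext (thetaSet_heartSlice hd U.2.2.1) },
    fun _ => rfl⟩

end ICEPaper
end

section
/- If the t-structure (D^{≤0}, D^{≥1}) is nondegenerate, then there is a bijective correspondence between the set of torsion classes in the heart H and the set of intermediate preaisles in D. -/
open CategoryTheory Limits ZeroObject

namespace ICEPaper

open Pretriangulated Triangulated

variable {D : Type*} [Category D] [Preadditive D] [HasZeroObject D] [HasShift D ℤ]
  [∀ n : ℤ, (shiftFunctor D n).Additive] [Pretriangulated D]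

variable (t : TStructure D)

variable {t} {A : Type*} [Category A] [Abelian A] (hd : HeartData t A)

lemma IsTorsionClass.mem₂_of_exact {T : Set A} (hT : IsTorsionClass T) {S : ShortComplex A}
    (hS : S.Exact) [Epi S.g] (h₁ : S.X₁ ∈ T) (h₃ : S.X₃ ∈ T) : S.X₂ ∈ T := by
  have hker : kernel S.g ∈ T :=
    hT.quot _ ((ShortComplex.exact_iff_epi_kernel_lift S).1 hS) h₁
  let K := ShortComplex.mk (kernel.ι S.g) S.g (kernel.condition S.g)
  exact hT.ext K { exact := K.exact_of_f_is_kernel (kernelIsKernel S.g) } hker h₃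

section HomologicalFunctor

variable (F : D ⥤ A) [F.IsHomological] {T : Triangle D}

lemma epi_map_mor₁_of_isZero (hT : T ∈ distTriang D) (h₃ : IsZero (F.obj T.obj₃)) :
    Epi (F.map T.mor₁) :=
  (F.map_distinguished_exact T hT).epi_f (h₃.eq_of_tgt _ 0)

lemma mono_map_mor₂_of_isZero (hT : T ∈ distTriang D) (h₁ : IsZero (F.obj T.obj₁)) :
    Mono (F.map T.mor₂) :=
  (F.map_distinguished_exact T hT).mono_g (h₁.eq_of_src _ 0)

end HomologicalFunctor

namespace HeartData

instance : hd.ι.Additive := hd.additive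
instance : hd.H0.IsHomological := hd.homological

lemma isZero_H0_obj_of_le_neg_one {X : D} (hX : t.le (-1) X) : IsZero (hd.H0.obj X) :=
  (hd.LE_vanish X (-1) 0 hX (by omega)).of_iso
    (hd.H0.mapIso ((shiftFunctorZero D ℤ).app X).symm)

lemma nonempty_ι_obj_H0_obj_iso {X : D} (hX : X ∈ heartSet t) :
    Nonempty (hd.ι.obj (hd.H0.obj X) ≅ X) := by
  obtain ⟨Y, ⟨e⟩⟩ := hd.heart_mem X hX
  exact ⟨hd.ι.mapIso (hd.H0.mapIso e.symm ≪≫ hd.heartIso.app Y) ≪≫ e⟩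

lemma exists_distTriang_H0 {X : D} (hX : t.le 0 X) :
    ∃ (P Q : D) (f : P ⟶ X) (g : X ⟶ Q) (h : Q ⟶ P⟦(1 : ℤ)⟧),
      t.le (-1) P ∧ Triangle.mk f g h ∈ distTriang D ∧
        Nonempty (hd.ι.obj (hd.H0.obj X) ≅ Q) := by
  obtain ⟨P, Q, hP, hQ, f, g, h, mem⟩ := t.exists_triangle X (-1) 0 (by omega)
  have hP₁ : t.le (-1) (P⟦(1 : ℤ)⟧) :=
    t.le_monotone (by omega) _ (t.le_shift (-1) 1 (-2) (by omega) P hP)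
  have hQ' : t.le 0 Q :=
    (t.isLE₂ _ (rot_of_distTriang _ mem) 0 ⟨hX⟩ ⟨t.le_monotone (by omega) _ hP₁⟩).le
  obtain ⟨e⟩ := hd.nonempty_ι_obj_H0_obj_iso ⟨hQ', hQ⟩
  have : Mono (hd.H0.map g) :=
    mono_map_mor₂_of_isZero hd.H0 mem (hd.isZero_H0_obj_of_le_neg_one hP)
  have : Epi (hd.H0.map g) :=
    epi_map_mor₁_of_isZero hd.H0 (rot_of_distTriang _ mem) (hd.isZero_H0_obj_of_le_neg_one hP₁)
  have : IsIso (hd.H0.map g) := isIso_of_mono_of_epi _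
  exact ⟨P, Q, f, g, h, hP, mem, ⟨hd.ι.mapIso (asIso (hd.H0.map g)) ≪≫ e⟩⟩

def preaisleOf (T : Set A) : Set D := {X : D | t.le 0 X ∧ hd.H0.obj X ∈ T}

def torsionClassOf (U : Set D) : Set A := {Y : A | hd.ι.obj Y ∈ U}

lemma preaisleOf_subset_le_zero (T : Set A) : hd.preaisleOf T ⊆ DLE t 0 := fun _ hX => hX.1

lemma le_neg_one_subset_preaisleOf {T : Set A} (hT : IsSubcat T) :
    DLE t (-1) ⊆ hd.preaisleOf T := fun X hX =>
  ⟨t.le_monotone (by omega) _ hX, hT.mem_of_isZero (hd.isZero_H0_obj_of_le_neg_one hX)⟩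

lemma isPreaisle_preaisleOf {T : Set A} (hT : IsTorsionClass T) :
    IsPreaisle (hd.preaisleOf T) where
  mem_of_iso X Y e hX :=
    ⟨((t.le 0).prop_iff_of_iso e).1 hX.1, hT.subcat.mem_of_iso (hd.H0.mapIso e) hX.2⟩
  zero_mem :=
    ⟨(t.isLE_of_isZero (isZero_zero D) 0).le,
      hT.subcat.mem_of_isZero (hd.H0.map_isZero (isZero_zero D))⟩
  ext Tr hTr h₁ h₃ := by
    refine ⟨(t.isLE₂ Tr hTr 0 ⟨h₁.1⟩ ⟨h₃.1⟩).le, ?_⟩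
    -- `H⁰` is right exact on `D^{≤0}`, as `H⁰ (Tr.obj₁⟦1⟧) = 0`.
    have : Epi ((shortComplexOfDistTriangle Tr hTr).map hd.H0).g :=
      epi_map_mor₁_of_isZero hd.H0 (rot_of_distTriang _ hTr)
        (hd.isZero_H0_obj_of_le_neg_one (t.le_shift 0 1 (-1) (by omega) _ h₁.1))
    exact hT.mem₂_of_exact (hd.H0.map_distinguished_exact Tr hTr) h₁.2 h₃.2
  shift X hX :=
    hd.le_neg_one_subset_preaisleOf hT.subcat (t.le_shift 0 1 (-1) (by omega) X hX.1)

lemma ι_obj_mem₂_of_shortExact {U : Set D} (hU : IsPreaisle U) {S : ShortComplex A}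
    (hS : S.ShortExact) (h₁ : hd.ι.obj S.X₁ ∈ U) (h₃ : hd.ι.obj S.X₃ ∈ U) :
    hd.ι.obj S.X₂ ∈ U := by
  obtain ⟨_, hT⟩ := (hd.shortExact_iff S).1 hS
  exact hU.ext _ hT h₁ h₃

lemma isTorsionClass_torsionClassOf {U : Set D} (hU : IsPreaisle U) (hU₁ : DLE t (-1) ⊆ U) :
    IsTorsionClass (hd.torsionClassOf U) := by
  refine ⟨⟨fun X Y e hX => hU.mem_of_iso (hd.ι.mapIso e) hX,
    hU.mem_of_iso (hd.ι.map_isZero (isZero_zero A)).isoZero.symm hU.zero_mem,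
    fun X Y hX hY => hd.ι_obj_mem₂_of_shortExact hU
      (ShortComplex.Splitting.ofHasBinaryBiproduct X Y).shortExact hX hY⟩,
    fun S hS => hd.ι_obj_mem₂_of_shortExact hU hS, fun X Y f _ hX => ?_⟩
  -- Rotating `ι (ker f) ⟶ ι X ⟶ ι Y ⟶` exhibits `ι Y` as an extension of
  -- `(ι (ker f))⟦1⟧ ∈ D^{≤-1}` by `ι X`.
  let S := ShortComplex.mk (kernel.ι f) f (kernel.condition f)
  obtain ⟨_, hT⟩ :=
    (hd.shortExact_iff S).1 { exact := S.exact_of_f_is_kernel (kernelIsKernel f) }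
  exact hU.ext _ (rot_of_distTriang _ hT) hX
    (hU₁ (t.le_shift 0 1 (-1) (by omega) _ (hd.mem_heart (kernel f)).1))

lemma torsionClassOf_preaisleOf {T : Set A} (hT : IsSubcat T) :
    hd.torsionClassOf (hd.preaisleOf T) = T := by
  ext Y
  exact ⟨fun hY => hT.mem_of_iso (hd.heartIso.app Y) hY.2,
    fun hY => ⟨(hd.mem_heart Y).1, hT.mem_of_iso (hd.heartIso.app Y).symm hY⟩⟩

lemma preaisleOf_torsionClassOf {U : Set D} (hU : IsPreaisle U) (hU₁ : DLE t (-1) ⊆ U)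
    (hU₀ : U ⊆ DLE t 0) : hd.preaisleOf (hd.torsionClassOf U) = U := by
  ext X
  constructor
  · rintro ⟨hX, hH⟩
    obtain ⟨P, Q, _, _, _, hP, mem, ⟨e⟩⟩ := hd.exists_distTriang_H0 hX
    exact hU.ext _ mem (hU₁ hP) (hU.mem_of_iso e hH)
  · intro hX
    obtain ⟨P, Q, _, _, _, hP, mem, ⟨e⟩⟩ := hd.exists_distTriang_H0 (hU₀ hX)
    have hQ : Q ∈ U := hU.ext _ (rot_of_distTriang _ mem) hX (hU.shift (hU₁ hP))
    exact ⟨hU₀ hX, hU.mem_of_iso e.symm hQ⟩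

def torsionClassEquivIntermediatePreaisle :
    {T : Set A // IsTorsionClass T} ≃
      {U : Set D // IsPreaisle U ∧ DLE t (-1) ⊆ U ∧ U ⊆ DLE t 0} where
  toFun T := ⟨hd.preaisleOf T, hd.isPreaisle_preaisleOf T.2,
    hd.le_neg_one_subset_preaisleOf T.2.subcat, hd.preaisleOf_subset_le_zero T⟩
  invFun U := ⟨hd.torsionClassOf U, hd.isTorsionClass_torsionClassOf U.2.1 U.2.2.1⟩
  left_inv T := Subtype.ext (hd.torsionClassOf_preaisleOf T.2.subcat)
  right_inv U := Subtype.ext (hd.preaisleOf_torsionClassOf U.2.1 U.2.2.1 U.2.2.2)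

end HeartData

/-- **Corollary.** If the t-structure is nondegenerate, then there is a bijective
correspondence between the set of torsion classes in the heart `H` and the set of
intermediate preaisles (`D^{≤-1} ⊆ U ⊆ D^{≤0}`) in `D`. -/
theorem torsionClasses_equiv_intermediatePreaisles
    {D : Type*} [Category D] [Preadditive D] [HasZeroObject D] [HasShift D ℤ]
    [∀ n : ℤ, (shiftFunctor D n).Additive] [Pretriangulated D]
    {t : Triangulated.TStructure D} {A : Type*} [Category A] [Abelian A]
    (hd : HeartData t A) (hnd : NonDegenerateT t) :
    Nonempty ({T : Set A // IsTorsionClass T} ≃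
      {U : Set D // IsPreaisle U ∧ DLE t (-1) ⊆ U ∧ U ⊆ DLE t 0}) :=
  ⟨hd.torsionClassEquivIntermediatePreaisle⟩

end ICEPaper
end
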